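/- For a fixed CFG and input of length n, the total number of elementary parsing steps of the variant Earley algorithm satisfies 𝒱 ≤ (n+2) · ℰ, where ℰ is the total number of elementary parsing steps of the Earley algorithm (each including the initialization steps counting the number of distinct start productions). -/

import Mathlib

/-! Formalization of Earley parsing and the Nederhof–Satta variant. -/

variable {T N : Type}

/-- A context-free grammar: a start nonterminal and a set of productions. -/
structure CFG (T N : Type) where
  initial : N
  rules : Set (N × List (Symbol T N))

/-- One rewriting step of the grammar. -/
def CFG.Produces (g : CFG T N) (u v : List (Symbol T N)) : Prop :=
  ∃ A α p q, (A, α) ∈ g.rules ∧ u = p ++ [Symbol.nonterminal A] ++ q ∧ v = p ++ α ++ q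

/-- The derivation relation ⇒* (reflexive-transitive closure of rewriting). -/
def CFG.Derives (g : CFG T N) : List (Symbol T N) → List (Symbol T N) → Prop :=
  Relation.ReflTransGen g.Produces

/-- The language of the grammar: { w | S ⇒* w }. -/
def CFG.language (g : CFG T N) : Set (List T) :=
  { w | g.Derives [Symbol.nonterminal g.initial] (w.map Symbol.terminal) }

/-- `inputSlice w i j` is the substring a_{i+1}⋯a_j of `w` (0-based: w[i..j)), as symbols. -/
def inputSlice (w : List T) (i j : ℕ) : List (Symbol T N) :=
  ((w.take j).drop i).map Symbol.terminal

/-- The least Earley table: `Earley g w A α β i j` means the dotted item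
[A → α • β] is inserted in E_{i,j}. -/
inductive Earley (g : CFG T N) (w : List T) :
    N → List (Symbol T N) → List (Symbol T N) → ℕ → ℕ → Prop where
  | init {α} : (g.initial, α) ∈ g.rules → Earley g w g.initial [] α 0 0
  | predict {B α A β i j γ} : Earley g w B α (Symbol.nonterminal A :: β) i j →
      (A, γ) ∈ g.rules → Earley g w A [] γ j j
  | scan {A α a β i j} : Earley g w A α (Symbol.terminal a :: β) i j →
      w[j]? = some a → Earley g w A (α ++ [Symbol.terminal a]) β i (j + 1)
  | complete {A α B β i k γ j} : Earley g w A α (Symbol.nonterminal B :: β) i k →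
      Earley g w B γ [] k j → (B, γ) ∈ g.rules →
      Earley g w A (α ++ [Symbol.nonterminal B]) β i j

mutual
  /-- Forward part of the variant: `VarU g w β j` means suffix item [β] ∈ U_j. -/
  inductive VarU (g : CFG T N) (w : List T) : List (Symbol T N) → ℕ → Prop where
    | init {α} : (g.initial, α) ∈ g.rules → VarU g w α 0
    | predict {A β j γ} : VarU g w (Symbol.nonterminal A :: β) j →
        (A, γ) ∈ g.rules → VarU g w γ j
    | scan {a β j} : VarU g w (Symbol.terminal a :: β) j → w[j]? = some a →
        VarU g w β (j + 1)
    | complete {B β k γ j} : VarU g w (Symbol.nonterminal B :: β) k → (B, γ) ∈ g.rules →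
        VarT g w γ k j → VarU g w β j

  /-- Backward part of the variant: `VarT g w β j m` means suffix item [β] ∈ T_{j,m}. -/
  inductive VarT (g : CFG T N) (w : List T) : List (Symbol T N) → ℕ → ℕ → Prop where
    | empty {m} : VarU g w [] m → VarT g w [] m m
    | scan {a β j m} : VarU g w (Symbol.terminal a :: β) j → w[j]? = some a →
        VarT g w β (j + 1) m → VarT g w (Symbol.terminal a :: β) j m
    | complete {B β k γ j m} : VarU g w (Symbol.nonterminal B :: β) k → (B, γ) ∈ g.rules →
        VarT g w γ k j → VarT g w β j m → VarT g w (Symbol.nonterminal B :: β) k m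
end

/-- Number of initialization steps: distinct right-hand sides of start productions. -/
noncomputable def countInit (g : CFG T N) : ℕ :=
  Set.ncard {α | (g.initial, α) ∈ g.rules}

/-- ℰ₁: applicable instantiations of Earley's prediction rule. -/
noncomputable def countE1 (g : CFG T N) (w : List T) : ℕ :=
  Set.ncard {x : N × List (Symbol T N) × N × List (Symbol T N) × ℕ × ℕ × List (Symbol T N) |
    match x with
      | (B, α, A, β, i, j, γ) =>
          Earley g w B α (Symbol.nonterminal A :: β) i j ∧ (A, γ) ∈ g.rules}

/-- ℰ₂: applicable instantiations of Earley's scanning rule. -/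
noncomputable def countE2 (g : CFG T N) (w : List T) : ℕ :=
  Set.ncard {x : N × List (Symbol T N) × T × List (Symbol T N) × ℕ × ℕ |
    match x with
      | (A, α, a, β, i, j) =>
          Earley g w A α (Symbol.terminal a :: β) i j ∧ w[j]? = some a}

/-- ℰ₃: applicable instantiations of Earley's completion rule. -/
noncomputable def countE3 (g : CFG T N) (w : List T) : ℕ :=
  Set.ncard {x : N × List (Symbol T N) × N × List (Symbol T N) × ℕ × ℕ × List (Symbol T N) × ℕ |
    match x with
      | (A, α, B, β, i, k, γ, j) =>
          Earley g w A α (Symbol.nonterminal B :: β) i k ∧ (B, γ) ∈ g.rules ∧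
        Earley g w B γ [] k j}

/-- 𝒱₁: applicable instantiations of the variant's forward prediction rule. -/
noncomputable def countV1 (g : CFG T N) (w : List T) : ℕ :=
  Set.ncard {x : N × List (Symbol T N) × ℕ × List (Symbol T N) |
    match x with
      | (A, β, j, γ) =>
          VarU g w (Symbol.nonterminal A :: β) j ∧ (A, γ) ∈ g.rules}

/-- 𝒱₂: applicable instantiations of the variant's forward scanning rule. -/
noncomputable def countV2 (g : CFG T N) (w : List T) : ℕ :=
  Set.ncard {x : T × List (Symbol T N) × ℕ |
    match x with
      | (a, β, j) =>
          VarU g w (Symbol.terminal a :: β) j ∧ w[j]? = some a}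

/-- 𝒱₃: applicable instantiations of the variant's forward completion rule. -/
noncomputable def countV3 (g : CFG T N) (w : List T) : ℕ :=
  Set.ncard {x : N × List (Symbol T N) × ℕ × List (Symbol T N) × ℕ |
    match x with
      | (B, β, k, γ, j) =>
          VarU g w (Symbol.nonterminal B :: β) k ∧ (B, γ) ∈ g.rules ∧ VarT g w γ k j}

/-- 𝒱₄: applicable instantiations of the variant's backward-initialization rule. -/
noncomputable def countV4 (g : CFG T N) (w : List T) : ℕ :=
  Set.ncard {m : ℕ | VarU g w [] m}

/-- 𝒱₅: applicable instantiations of the variant's backward scanning rule. -/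
noncomputable def countV5 (g : CFG T N) (w : List T) : ℕ :=
  Set.ncard {x : T × List (Symbol T N) × ℕ × ℕ |
    match x with
      | (a, β, j, m) =>
          VarU g w (Symbol.terminal a :: β) j ∧ w[j]? = some a ∧ VarT g w β (j + 1) m}

/-- 𝒱₆: applicable instantiations of the variant's backward completion rule. -/
noncomputable def countV6 (g : CFG T N) (w : List T) : ℕ :=
  Set.ncard {x : N × List (Symbol T N) × ℕ × List (Symbol T N) × ℕ × ℕ |
    match x with
      | (B, β, k, γ, j, m) =>
          VarU g w (Symbol.nonterminal B :: β) k ∧ (B, γ) ∈ g.rules ∧ VarT g w γ k j ∧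
        VarT g w β j m}

/-! Every forward item [β] ∈ U_j of the variant is the suffix of an Earley item
[A → α • β] ∈ E_{i,j}, and a backward item [β] ∈ T_{j,m} completes every such Earley item
to [A → αβ •] ∈ E_{i,m}. Hence each forward step of the variant is the projection of an Earley
step with the same premises (𝒱₁ ≤ ℰ₁, 𝒱₂ ≤ ℰ₂, 𝒱₃ ≤ ℰ₃), and each backward step is determined by
an Earley step or an initialization together with its right end m ≤ n
(𝒱₅ ≤ (n+1)ℰ₂, 𝒱₆ ≤ (n+1)ℰ₃, 𝒱₄ ≤ (n+1)·|{α | S → α ∈ P}|). -/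

theorem ncard_le_ncard_of_subset_image {α β : Type*} {s : Set α} {t : Set β} {f : β → α}
    (ht : t.Finite) (h : s ⊆ f '' t) : s.ncard ≤ t.ncard :=
  (Set.ncard_le_ncard h (ht.image f)).trans (Set.ncard_image_le ht)

theorem ncard_le_mul_of_subset_image_prod_Iic {α β : Type*} {s : Set α} {t : Set β}
    {f : β × ℕ → α} {n : ℕ} (ht : t.Finite) (h : s ⊆ f '' (t ×ˢ Set.Iic n)) :
    s.ncard ≤ t.ncard * (n + 1) := by
  simpa [Set.ncard_prod] using ncard_le_ncard_of_subset_image (ht.prod (Set.finite_Iic n)) h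

theorem Set.Finite.setOf_append_mem {α β : Type*} {R : Set (α × List β)} (hR : R.Finite) :
    {x : α × List β × List β | (x.1, x.2.1 ++ x.2.2) ∈ R}.Finite := by
  refine (hR.biUnion fun r _ =>
    (Set.finite_Iic r.2.length).image fun k => (r.1, r.2.take k, r.2.drop k)).subset ?_
  rintro ⟨A, α, β⟩ h
  simp only [Set.mem_iUnion, Set.mem_image]
  exact ⟨_, h, α.length, by simp, by simp⟩

section Earley

variable {g : CFG T N} {w : List T}

theorem Earley.mem_rules {A α β i j} (h : Earley g w A α β i j) : (A, α ++ β) ∈ g.rules := by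
  induction h with
  | init hr | predict _ hr => simpa using hr
  | scan _ _ ih | complete _ _ _ ih => simpa using ih

theorem Earley.le {A α β i j} (h : Earley g w A α β i j) : i ≤ j := by
  induction h with
  | init | predict => exact le_rfl
  | scan _ _ ih => exact ih.trans (Nat.le_succ _)
  | complete _ _ _ ih₁ ih₂ => exact ih₁.trans ih₂

theorem Earley.le_length {A α β i j} (h : Earley g w A α β i j) : j ≤ w.length := by
  induction h with
  | init => exact Nat.zero_le _
  | predict _ _ ih | complete _ _ _ _ ih => exact ih
  | scan _ ha => exact (List.getElem?_eq_some_iff.mp ha).1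

theorem Earley.exists_initial_mem {A α β i j} (h : Earley g w A α β i j) :
    ∃ δ, (g.initial, δ) ∈ g.rules := by
  induction h with
  | init hr => exact ⟨_, hr⟩
  | predict _ _ ih | scan _ _ ih | complete _ _ _ ih => exact ih

mutual

theorem VarU.exists_earley {β j} : VarU g w β j → ∃ A α i, Earley g w A α β i j
  | .init hr => ⟨_, _, _, .init hr⟩
  | .predict hu hr =>
    let ⟨_, _, _, he⟩ := hu.exists_earley
    ⟨_, _, _, he.predict hr⟩
  | .scan hu ha =>
    let ⟨_, _, _, he⟩ := hu.exists_earley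
    ⟨_, _, _, he.scan ha⟩
  | .complete hu hr ht =>
    let ⟨_, _, _, he⟩ := hu.exists_earley
    ⟨_, _, _, he.complete (ht.earley_append (he.predict hr)) hr⟩

theorem VarT.earley_append {β k m A α i} :
    VarT g w β k m → Earley g w A α β i k → Earley g w A (α ++ β) [] i m
  | .empty _, he => by simpa using he
  | .scan _ ha ht, he => by simpa using ht.earley_append (he.scan ha)
  | .complete _ hr ht₁ ht₂, he => by
    simpa using ht₂.earley_append (he.complete (ht₁.earley_append (he.predict hr)) hr)

end

theorem finite_setOf_earley (hfin : g.rules.Finite) :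
    {x : N × List (Symbol T N) × List (Symbol T N) × ℕ × ℕ |
      Earley g w x.1 x.2.1 x.2.2.1 x.2.2.2.1 x.2.2.2.2}.Finite := by
  refine Set.Finite.of_injOn (f := fun x => ((x.1, x.2.1, x.2.2.1), x.2.2.2.1, x.2.2.2.2))
    (t := {x | (x.1, x.2.1 ++ x.2.2) ∈ g.rules} ×ˢ Set.Iic w.length ×ˢ Set.Iic w.length)
    ?_ (fun ⟨_, _, _, _⟩ _ ⟨_, _, _, _⟩ _ h => by simpa [and_assoc] using h)
    (hfin.setOf_append_mem.prod ((Set.finite_Iic _).prod (Set.finite_Iic _)))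
  rintro ⟨A, α, β, i, j⟩ (h : Earley g w A α β i j)
  exact ⟨h.mem_rules, h.le.trans h.le_length, h.le_length⟩

theorem finite_earleyPredict (hfin : g.rules.Finite) :
    {x : N × List (Symbol T N) × N × List (Symbol T N) × ℕ × ℕ × List (Symbol T N) |
      match x with
        | (B, α, A, β, i, j, γ) =>
            Earley g w B α (Symbol.nonterminal A :: β) i j ∧ (A, γ) ∈ g.rules}.Finite :=
  Set.Finite.of_injOn
    (f := fun ⟨B, α, A, β, i, j, γ⟩ => ((B, α, Symbol.nonterminal A :: β, i, j), (A, γ)))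
    (fun _ h => h) (fun ⟨_, _, _, _, _, _, _⟩ _ ⟨_, _, _, _, _, _, _⟩ _ h => by simp_all)
    ((finite_setOf_earley hfin).prod hfin)

theorem finite_earleyScan (hfin : g.rules.Finite) :
    {x : N × List (Symbol T N) × T × List (Symbol T N) × ℕ × ℕ |
      match x with
        | (A, α, a, β, i, j) =>
            Earley g w A α (Symbol.terminal a :: β) i j ∧ w[j]? = some a}.Finite :=
  Set.Finite.of_injOn (f := fun ⟨A, α, a, β, i, j⟩ => (A, α, Symbol.terminal a :: β, i, j))
    (fun _ h => h.1) (fun ⟨_, _, _, _, _, _⟩ _ ⟨_, _, _, _, _, _⟩ _ h => by simp_all)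
    (finite_setOf_earley hfin)

theorem finite_earleyComplete (hfin : g.rules.Finite) :
    {x : N × List (Symbol T N) × N × List (Symbol T N) × ℕ × ℕ × List (Symbol T N) × ℕ |
      match x with
        | (A, α, B, β, i, k, γ, j) =>
            Earley g w A α (Symbol.nonterminal B :: β) i k ∧ (B, γ) ∈ g.rules ∧
          Earley g w B γ [] k j}.Finite :=
  Set.Finite.of_injOn
    (f := fun ⟨A, α, B, β, i, k, γ, j⟩ => ((A, α, Symbol.nonterminal B :: β, i, k), (B, γ), j))
    (fun _ h => by exact ⟨h.1, h.2.1, h.2.2.le_length⟩)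
    (fun ⟨_, _, _, _, _, _, _, _⟩ _ ⟨_, _, _, _, _, _, _, _⟩ _ h => by simp_all)
    ((finite_setOf_earley hfin).prod (hfin.prod (Set.finite_Iic w.length)))

theorem countV1_le (hfin : g.rules.Finite) : countV1 g w ≤ countE1 g w := by
  refine ncard_le_ncard_of_subset_image (f := fun ⟨_, _, A, β, _, j, γ⟩ => (A, β, j, γ))
    (finite_earleyPredict hfin) ?_
  rintro ⟨A, β, j, γ⟩ ⟨hu, hr⟩
  obtain ⟨B, α, i, he⟩ := hu.exists_earley
  exact ⟨(B, α, A, β, i, j, γ), ⟨he, hr⟩, rfl⟩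

theorem countV2_le (hfin : g.rules.Finite) : countV2 g w ≤ countE2 g w := by
  refine ncard_le_ncard_of_subset_image (f := fun ⟨_, _, a, β, _, j⟩ => (a, β, j))
    (finite_earleyScan hfin) ?_
  rintro ⟨a, β, j⟩ ⟨hu, ha⟩
  obtain ⟨A, α, i, he⟩ := hu.exists_earley
  exact ⟨(A, α, a, β, i, j), ⟨he, ha⟩, rfl⟩

theorem countV3_le (hfin : g.rules.Finite) : countV3 g w ≤ countE3 g w := by
  refine ncard_le_ncard_of_subset_image (f := fun ⟨_, _, B, β, _, k, γ, j⟩ => (B, β, k, γ, j))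
    (finite_earleyComplete hfin) ?_
  rintro ⟨B, β, k, γ, j⟩ ⟨hu, hr, ht⟩
  obtain ⟨A, α, i, he⟩ := hu.exists_earley
  exact ⟨(A, α, B, β, i, k, γ, j), ⟨he, hr, ht.earley_append (he.predict hr)⟩, rfl⟩

theorem countV4_le (hfin : g.rules.Finite) : countV4 g w ≤ countInit g * (w.length + 1) := by
  refine ncard_le_mul_of_subset_image_prod_Iic (f := Prod.snd)
    (hfin.preimage (Prod.mk_right_injective g.initial).injOn) ?_
  intro m hu
  obtain ⟨_, _, _, he⟩ := VarU.exists_earley hu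
  obtain ⟨δ, hδ⟩ := he.exists_initial_mem
  exact ⟨(δ, m), ⟨hδ, he.le_length⟩, rfl⟩

theorem countV5_le (hfin : g.rules.Finite) : countV5 g w ≤ countE2 g w * (w.length + 1) := by
  refine ncard_le_mul_of_subset_image_prod_Iic
    (f := fun ⟨⟨_, _, a, β, _, j⟩, m⟩ => (a, β, j, m)) (finite_earleyScan hfin) ?_
  rintro ⟨a, β, j, m⟩ ⟨hu, ha, ht⟩
  obtain ⟨A, α, i, he⟩ := hu.exists_earley
  exact ⟨((A, α, a, β, i, j), m), ⟨⟨he, ha⟩, (ht.earley_append (he.scan ha)).le_length⟩, rfl⟩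

theorem countV6_le (hfin : g.rules.Finite) : countV6 g w ≤ countE3 g w * (w.length + 1) := by
  refine ncard_le_mul_of_subset_image_prod_Iic
    (f := fun ⟨⟨_, _, B, β, _, k, γ, j⟩, m⟩ => (B, β, k, γ, j, m)) (finite_earleyComplete hfin) ?_
  rintro ⟨B, β, k, γ, j, m⟩ ⟨hu, hr, ht₁, ht₂⟩
  obtain ⟨A, α, i, he⟩ := hu.exists_earley
  have hc := ht₁.earley_append (he.predict hr)
  exact ⟨((A, α, B, β, i, k, γ, j), m),
    ⟨⟨he, hr, hc⟩, (ht₂.earley_append (he.complete hc hr)).le_length⟩, rfl⟩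

end Earley

/-- 𝒱 ≤ (n+2) · ℰ. -/
theorem variant_steps_le (g : CFG T N) (w : List T) (hfin : g.rules.Finite) :
    countV1 g w + countV2 g w + countV3 g w + countV4 g w + countV5 g w +
        countV6 g w + countInit g ≤
      (w.length + 2) * (countE1 g w + countE2 g w + countE3 g w + countInit g) := by
  have h₁ := countV1_le (w := w) hfin
  have h₂ := countV2_le (w := w) hfin
  have h₃ := countV3_le (w := w) hfin
  have h₄ := countV4_le (w := w) hfin
  have h₅ := countV5_le (w := w) hfin
  have h₆ := countV6_le (w := w) hfin
  nlinarith
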